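/- arXiv:1512.03545 — 2 statements merged into one kernel-verified Lean document; each statement's English description precedes it below -/
import Mathlib

section
/- For all 0 < t < s ≤ 1, (∫_t^s (K(s,t) − K(u,t)) (s−u)^{−(1/2+H)} du)² ≤ 2 c_H² (B(H−1/2, 3/2−H)² + 1/(H−1/2)²) t^{1−2H} / (H−1/2)², the inner integral being absolutely convergent. -/
open MeasureTheory Real Set

noncomputable def betaFn (a b : ℝ) : ℝ := Real.Gamma a * Real.Gamma b / Real.Gamma (a + b)

noncomputable def cH (H : ℝ) : ℝ := Real.sqrt (H * (2*H - 1) / betaFn (2 - 2*H) (H - 1/2))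

/-- The kernel `K(t,s)` of the fractional integral operator, for Hurst parameter `H`. -/
noncomputable def Ker (H t s : ℝ) : ℝ :=
  if s < t then cH H * s ^ ((1:ℝ)/2 - H) * ∫ u in s..t, u ^ (H - 1/2) * (u - s) ^ (H - 3/2)
  else 0

/-- The operator `(Kh)_t = ∫_0^t K(t,s) h_s ds`. -/
noncomputable def Kop {n : ℕ} (H : ℝ) (h : ℝ → EuclideanSpace ℝ (Fin n)) (t : ℝ) :
    EuclideanSpace ℝ (Fin n) :=
  ∫ s in (0:ℝ)..t, Ker H t s • h s

/-- The constant `C₂ = ∫_0^1 (v^{1/2-H} - 1)(1-v)^{-(1/2+H)} dv`. -/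
noncomputable def C2 (H : ℝ) : ℝ :=
  ∫ v in (0:ℝ)..1, (v ^ ((1:ℝ)/2 - H) - 1) * (1 - v) ^ (-(1/2 + H))

/-!
For `t < u < s`, `K(s,t) - K(u,t) = c_H t^{1/2-H} ∫_u^s v^{H-1/2} (v-t)^{H-3/2} dv`, and since
`v ≤ 1` and `(v-t)^{H-3/2}` decreases in `v`, this integral is at most `(s-u)(u-t)^{H-3/2}`.
So the integrand is dominated by `c_H t^{1/2-H} (u-t)^{H-3/2} (s-u)^{1/2-H}`, a Beta integrand
whose exponents add up to `-1`: its integral over `[t,s]` is `c_H t^{1/2-H} B(H-1/2, 3/2-H)`,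
independently of `s - t`. Squaring, it remains to note `B² ≤ 2(B² + (H-1/2)⁻²)/(H-1/2)²`.
-/
theorem betaFn_eq_integral {a b : ℝ} (ha : 0 < a) (hb : 0 < b) :
    betaFn a b = ∫ x in (0:ℝ)..1, x ^ (a - 1) * (1 - x) ^ (b - 1) := by
  have hcpx : Complex.betaIntegral a b =
      ((∫ x in (0:ℝ)..1, x ^ (a - 1) * (1 - x) ^ (b - 1) : ℝ) : ℂ) := by
    rw [← intervalIntegral.integral_ofReal, Complex.betaIntegral]
    refine intervalIntegral.integral_congr fun x hx => ?_
    rw [uIcc_of_le zero_le_one] at hx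
    simp only [Complex.ofReal_mul, Complex.ofReal_cpow hx.1,
      Complex.ofReal_cpow (sub_nonneg.2 hx.2)]
    push_cast; rfl
  show ProbabilityTheory.beta a b = _
  simpa [hcpx] using ProbabilityTheory.beta_eq_betaIntegralReal a b ha hb

theorem integral_sub_rpow_mul_rpow_sub {a b t s : ℝ} (ha : 0 < a) (hb : 0 < b) (hts : t < s) :
    ∫ u in t..s, (u - t) ^ (a - 1) * (s - u) ^ (b - 1) = (s - t) ^ (a + b - 1) * betaFn a b := by
  have hst : 0 < s - t := sub_pos.2 hts
  have hsub := intervalIntegral.smul_integral_comp_mul_add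
    (fun u => (u - t) ^ (a - 1) * (s - u) ^ (b - 1)) (a := 0) (b := 1) (s - t) t
  simp only [mul_zero, zero_add, mul_one, sub_add_cancel, smul_eq_mul] at hsub
  rw [← hsub, betaFn_eq_integral ha hb, ← intervalIntegral.integral_const_mul,
    ← intervalIntegral.integral_const_mul]
  refine intervalIntegral.integral_congr fun x hx => ?_
  rw [uIcc_of_le zero_le_one] at hx
  have h1 : (s - t) * x + t - t = (s - t) * x := by ring
  have h2 : s - ((s - t) * x + t) = (s - t) * (1 - x) := by ring
  simp only [h1, h2, Real.mul_rpow hst.le hx.1, Real.mul_rpow hst.le (sub_nonneg.2 hx.2)]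
  rw [show a + b - 1 = 1 + (a - 1) + (b - 1) by ring, Real.rpow_add hst, Real.rpow_add hst,
    Real.rpow_one]
  ring

theorem intervalIntegrable_sub_rpow_mul_rpow_sub {a b t s : ℝ} (ha : -1 < a) (hb : -1 < b)
    (hts : t < s) :
    IntervalIntegrable (fun u => (u - t) ^ a * (s - u) ^ b) volume t s := by
  have htm : t < (t + s) / 2 := by linarith
  have hms : (t + s) / 2 < s := by linarith
  refine IntervalIntegrable.trans (b := (t + s) / 2) ?_ ?_
  · refine IntervalIntegrable.mul_continuousOn ?_ ?_
    · simpa using (intervalIntegral.intervalIntegrable_rpow' ha (a := t - t)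
        (b := (t + s) / 2 - t)).comp_sub_right t
    · refine ContinuousOn.rpow_const (by fun_prop) fun u hu => Or.inl ?_
      rw [uIcc_of_le htm.le] at hu
      linarith [hu.2]
  · refine IntervalIntegrable.continuousOn_mul ?_ ?_
    · simpa using (intervalIntegral.intervalIntegrable_rpow' hb (a := s - (t + s) / 2)
        (b := s - s)).comp_sub_left s
    · refine ContinuousOn.rpow_const (by fun_prop) fun u hu => Or.inl ?_
      rw [uIcc_of_le hms.le] at hu
      linarith [hu.1]

section Kernel

variable {H t : ℝ}

theorem cH_nonneg : 0 ≤ cH H := Real.sqrt_nonneg _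

theorem intervalIntegrable_rpow_mul_sub_rpow (hH : 1/2 < H) (b : ℝ) :
    IntervalIntegrable (fun v => v ^ (H - 1/2) * (v - t) ^ (H - 3/2)) volume t b := by
  refine IntervalIntegrable.continuousOn_mul ?_
    (continuousOn_id.rpow_const fun _ _ => Or.inr (by linarith))
  simpa using (intervalIntegral.intervalIntegrable_rpow' (r := H - 3/2) (by linarith)
    (a := t - t) (b := b - t)).comp_sub_right t

theorem Ker_sub_Ker (hH : 1/2 < H) {u s : ℝ} (htu : t < u) (hts : t < s) :
    Ker H s t - Ker H u t =
      cH H * t ^ ((1:ℝ)/2 - H) * ∫ v in u..s, v ^ (H - 1/2) * (v - t) ^ (H - 3/2) := by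
  rw [Ker, Ker, if_pos hts, if_pos htu, ← mul_sub,
    intervalIntegral.integral_interval_sub_left (intervalIntegrable_rpow_mul_sub_rpow hH s)
      (intervalIntegrable_rpow_mul_sub_rpow hH u)]

theorem continuousOn_Ker_left (hH : 1/2 < H) :
    ContinuousOn (fun u => Ker H u t) (Ioi t) := by
  have hint : ∀ a b,
      IntervalIntegrable (fun v => v ^ (H - 1/2) * (v - t) ^ (H - 3/2)) volume a b :=
    fun a b => (intervalIntegrable_rpow_mul_sub_rpow hH a).symm.trans
      (intervalIntegrable_rpow_mul_sub_rpow hH b)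
  refine ContinuousOn.congr (f := fun u => cH H * t ^ ((1:ℝ)/2 - H) *
    ∫ v in t..u, v ^ (H - 1/2) * (v - t) ^ (H - 3/2))
    (continuous_const.mul (intervalIntegral.continuous_primitive hint t)).continuousOn
    fun u hu => ?_
  simp only [Ker, if_pos (show t < u from hu)]

theorem integral_rpow_mul_sub_rpow_nonneg (ht : 0 ≤ t) {u s : ℝ} (htu : t ≤ u) (hus : u ≤ s) :
    0 ≤ ∫ v in u..s, v ^ (H - 1/2) * (v - t) ^ (H - 3/2) :=
  intervalIntegral.integral_nonneg hus fun v hv =>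
    mul_nonneg (Real.rpow_nonneg (by linarith [hv.1]) _) (Real.rpow_nonneg (by linarith [hv.1]) _)

theorem integral_rpow_mul_sub_rpow_le (hH : H ∈ Ioo (1/2 : ℝ) (3/2)) (ht : 0 ≤ t) {u s : ℝ}
    (htu : t < u) (hus : u ≤ s) (hs : s ≤ 1) :
    ∫ v in u..s, v ^ (H - 1/2) * (v - t) ^ (H - 3/2) ≤ (s - u) * (u - t) ^ (H - 3/2) := by
  have hint : IntervalIntegrable (fun v => v ^ (H - 1/2) * (v - t) ^ (H - 3/2)) volume u s :=
    (intervalIntegrable_rpow_mul_sub_rpow hH.1 s).mono_set (by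
      rw [uIcc_of_le hus, uIcc_of_le (htu.le.trans hus)]; exact Icc_subset_Icc_left htu.le)
  calc ∫ v in u..s, v ^ (H - 1/2) * (v - t) ^ (H - 3/2)
      ≤ ∫ _ in u..s, (u - t) ^ (H - 3/2) :=
        intervalIntegral.integral_mono_on hus hint intervalIntegrable_const fun v hv => by
          have hv0 : 0 ≤ v := by linarith [hv.1]
          calc v ^ (H - 1/2) * (v - t) ^ (H - 3/2) ≤ 1 * (v - t) ^ (H - 3/2) :=
                mul_le_mul_of_nonneg_right
                  (Real.rpow_le_one hv0 (hv.2.trans hs) (by linarith [hH.1]))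
                  (Real.rpow_nonneg (by linarith [hv.1]) _)
            _ ≤ (u - t) ^ (H - 3/2) := by
                rw [one_mul]
                exact Real.rpow_le_rpow_of_nonpos (sub_pos.2 htu) (by linarith [hv.1])
                  (by linarith [hH.2])
    _ = (s - u) * (u - t) ^ (H - 3/2) := by
        rw [intervalIntegral.integral_const, smul_eq_mul]

theorem Ker_sub_Ker_mul_rpow_nonneg (hH : 1/2 < H) (ht : 0 ≤ t) {u s : ℝ} (hu : u ∈ Ioo t s) :
    0 ≤ (Ker H s t - Ker H u t) * (s - u) ^ (-(1/2 + H)) := by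
  rw [Ker_sub_Ker hH hu.1 (hu.1.trans hu.2)]
  exact mul_nonneg (mul_nonneg (mul_nonneg cH_nonneg (Real.rpow_nonneg ht _))
    (integral_rpow_mul_sub_rpow_nonneg ht hu.1.le hu.2.le))
    (Real.rpow_nonneg (by linarith [hu.2]) _)

theorem Ker_sub_Ker_mul_rpow_le (hH : H ∈ Ioo (1/2 : ℝ) (3/2)) (ht : 0 ≤ t) {u s : ℝ}
    (hu : u ∈ Ioo t s) (hs : s ≤ 1) :
    (Ker H s t - Ker H u t) * (s - u) ^ (-(1/2 + H)) ≤
      cH H * t ^ ((1:ℝ)/2 - H) * ((u - t) ^ (H - 3/2) * (s - u) ^ ((1:ℝ)/2 - H)) := by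
  have hsu : 0 < s - u := sub_pos.2 hu.2
  rw [Ker_sub_Ker hH.1 hu.1 (hu.1.trans hu.2)]
  calc cH H * t ^ ((1:ℝ)/2 - H) * (∫ v in u..s, v ^ (H - 1/2) * (v - t) ^ (H - 3/2)) *
        (s - u) ^ (-(1/2 + H))
      ≤ cH H * t ^ ((1:ℝ)/2 - H) * ((s - u) * (u - t) ^ (H - 3/2)) * (s - u) ^ (-(1/2 + H)) := by
        gcongr
        · exact mul_nonneg cH_nonneg (Real.rpow_nonneg ht _)
        · exact integral_rpow_mul_sub_rpow_le hH ht hu.1 hu.2.le hs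
    _ = cH H * t ^ ((1:ℝ)/2 - H) * ((u - t) ^ (H - 3/2) * (s - u) ^ ((1:ℝ)/2 - H)) := by
        rw [show (1:ℝ)/2 - H = 1 + (-(1/2 + H)) by ring, Real.rpow_add hsu, Real.rpow_one]
        ring

theorem integrableOn_rpow_sub_mul_rpow_sub (hH : H ∈ Ioo (1/2 : ℝ) (3/2)) {s : ℝ} (hts : t < s) :
    IntegrableOn (fun u => (u - t) ^ (H - 3/2) * (s - u) ^ ((1:ℝ)/2 - H)) (Ioo t s) :=
  (intervalIntegrable_sub_rpow_mul_rpow_sub (by linarith [hH.1]) (by linarith [hH.2])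
    hts).1.mono_set Ioo_subset_Ioc_self

theorem integrableOn_Ker_sub_Ker_mul_rpow (hH : H ∈ Ioo (1/2 : ℝ) (3/2)) (ht : 0 ≤ t) {s : ℝ}
    (hts : t < s) (hs : s ≤ 1) :
    IntegrableOn (fun u => (Ker H s t - Ker H u t) * (s - u) ^ (-(1/2 + H))) (Ioo t s) := by
  have hcont : ContinuousOn (fun u => (Ker H s t - Ker H u t) * (s - u) ^ (-(1/2 + H)))
      (Ioo t s) :=
    (continuousOn_const.sub ((continuousOn_Ker_left hH.1).mono Ioo_subset_Ioi_self)).mul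
      (ContinuousOn.rpow_const (by fun_prop) fun u hu => Or.inl (by linarith [hu.2]))
  refine ((integrableOn_rpow_sub_mul_rpow_sub hH hts).const_mul
    (cH H * t ^ ((1:ℝ)/2 - H))).mono' (hcont.aestronglyMeasurable measurableSet_Ioo) ?_
  refine (ae_restrict_iff' measurableSet_Ioo).2 (Filter.Eventually.of_forall fun u hu => ?_)
  rw [Real.norm_of_nonneg (Ker_sub_Ker_mul_rpow_nonneg hH.1 ht hu)]
  exact Ker_sub_Ker_mul_rpow_le hH ht hu hs

theorem integral_Ker_sub_Ker_mul_rpow_nonneg (hH : 1/2 < H) (ht : 0 ≤ t) {s : ℝ} (hts : t ≤ s) :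
    0 ≤ ∫ u in t..s, (Ker H s t - Ker H u t) * (s - u) ^ (-(1/2 + H)) := by
  rw [intervalIntegral.integral_of_le hts, integral_Ioc_eq_integral_Ioo]
  exact setIntegral_nonneg measurableSet_Ioo fun u hu => Ker_sub_Ker_mul_rpow_nonneg hH ht hu

theorem integral_Ker_sub_Ker_mul_rpow_le (hH : H ∈ Ioo (1/2 : ℝ) (3/2)) (ht : 0 ≤ t) {s : ℝ}
    (hts : t < s) (hs : s ≤ 1) :
    ∫ u in t..s, (Ker H s t - Ker H u t) * (s - u) ^ (-(1/2 + H)) ≤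
      cH H * t ^ ((1:ℝ)/2 - H) * betaFn (H - 1/2) (3/2 - H) := by
  have hbeta := integral_sub_rpow_mul_rpow_sub (sub_pos.2 hH.1) (sub_pos.2 hH.2) hts
  rw [show H - 1/2 + (3/2 - H) - 1 = 0 by ring, Real.rpow_zero, one_mul,
    show H - 1/2 - 1 = H - 3/2 by ring, show 3/2 - H - 1 = (1:ℝ)/2 - H by ring] at hbeta
  rw [← hbeta, ← intervalIntegral.integral_const_mul]
  simp only [intervalIntegral.integral_of_le hts.le, integral_Ioc_eq_integral_Ioo]
  exact setIntegral_mono_on (integrableOn_Ker_sub_Ker_mul_rpow hH ht hts hs)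
    ((integrableOn_rpow_sub_mul_rpow_sub hH hts).const_mul _) measurableSet_Ioo
    fun u hu => Ker_sub_Ker_mul_rpow_le hH ht hu hs

end Kernel

/-- Estimate (41): for `0 < t < s ≤ 1`,
`(∫_t^s (K(s,t)-K(u,t))(s-u)^{-(1/2+H)} du)² ≤ 2c_H²(B(H-1/2,3/2-H)² + 1/(H-1/2)²) t^{1-2H}/(H-1/2)²`,
the inner integral being absolutely convergent. -/
theorem stmt_14 (H : ℝ) (hH : H ∈ Set.Ioo (1/2 : ℝ) 1) (t s : ℝ)
    (ht : 0 < t) (hts : t < s) (hs : s ≤ 1) :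
    IntegrableOn (fun u : ℝ => (Ker H s t - Ker H u t) * (s - u) ^ (-(1/2 + H)))
      (Set.Ioo t s) ∧
    (∫ u in t..s, (Ker H s t - Ker H u t) * (s - u) ^ (-(1/2 + H)))^2 ≤
      2 * (cH H)^2 * ((betaFn (H - 1/2) (3/2 - H))^2 + 1 / (H - 1/2)^2) *
        t ^ (1 - 2*H) / (H - 1/2)^2 := by
  have hH' : H ∈ Ioo (1/2 : ℝ) (3/2) := ⟨hH.1, by linarith [hH.2]⟩
  refine ⟨integrableOn_Ker_sub_Ker_mul_rpow hH' ht.le hts hs, ?_⟩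
  set B := betaFn (H - 1/2) (3/2 - H)
  have hc : 0 < H - 1/2 := sub_pos.2 hH.1
  have hB : B ^ 2 ≤ 2 * (B ^ 2 + 1 / (H - 1/2) ^ 2) / (H - 1/2) ^ 2 := by
    rw [le_div_iff₀ (by positivity)]
    have hc1 : (H - 1/2) ^ 2 ≤ 1 := by nlinarith [hH.2]
    nlinarith [mul_le_mul_of_nonneg_left hc1 (sq_nonneg B), one_div_pos.2 (pow_pos hc 2)]
  have ht2 : (t ^ ((1:ℝ)/2 - H)) ^ 2 = t ^ (1 - 2*H) := by
    rw [← Real.rpow_natCast, ← Real.rpow_mul ht.le]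
    congr 1
    push_cast
    ring
  calc (∫ u in t..s, (Ker H s t - Ker H u t) * (s - u) ^ (-(1/2 + H))) ^ 2
      ≤ (cH H * t ^ ((1:ℝ)/2 - H) * B) ^ 2 :=
        pow_le_pow_left₀ (integral_Ker_sub_Ker_mul_rpow_nonneg hH.1 ht.le hts.le)
          (integral_Ker_sub_Ker_mul_rpow_le hH' ht.le hts hs) 2
    _ = (cH H) ^ 2 * t ^ (1 - 2*H) * B ^ 2 := by rw [mul_pow, mul_pow, ht2]
    _ ≤ (cH H) ^ 2 * t ^ (1 - 2*H) * (2 * (B ^ 2 + 1 / (H - 1/2) ^ 2) / (H - 1/2) ^ 2) := by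
        gcongr
    _ = _ := by ring
end

section
/- Let α > 0, let C₁ > 0 be such that 0 ≤ K(s,t) ≤ C₁ t^{1/2−H} for all 0 < t < s ≤ 1, and let C > 0 and Ĉ > 0 be constants. Let g, P ∈ L²([0,1]; ℝⁿ) be such that |∫_t^1 P_s ds|² ≤ C ∫_0^1 |g_s|² ds for all t ∈ [0,1] and |∫_t^1 K(s,t) P_s ds|² ≤ Ĉ t^{1−2H} ∫_0^1 |g_s|² ds for all t ∈ (0,1]. Then ∫_0^1 |g_t + ∫_t^1 K(s,t) (α² e^{αs} ∫_s^1 e^{−αu} P_u du − α P_s) ds|² dt ≤ 2 (1 + 4 α⁴ e^{2α} C₁² (1 + α²) C/(2−2H) + 2 α² Ĉ/(2−2H)) ∫_0^1 |g_s|² ds. -/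
open MeasureTheory Real Set

/-!
Fix `t ∈ (0,1]` and write `Q_s = ∫_s^1 e^{-αu} P_u du`. Integrating by parts against the tail
`F_r = ∫_r^1 P_u du`, which is bounded by `R = √(C ∫|g|²)`, gives `|Q_s| ≤ (1 + α) R`; together
with `0 ≤ K(s,t) ≤ C₁ t^{1/2-H}` this bounds the `Q`-part of the inner integral by
`C₁ t^{1/2-H} α² e^α (1 + α) R`, while the `P`-part is `α ∫_t^1 K(s,t) P_s ds`, controlled by
hypothesis. Squaring with `|a + b + c|² ≤ 2|a|² + 4|b|² + 4|c|²` and `(1 + α)² ≤ 2(1 + α²)`, the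
outer integrand is at most `2|g_t|² + (8α⁴e^{2α}C₁²(1 + α²)C + 4α²Ĉ) t^{1-2H} ∫|g|²`, and
`∫_0^1 t^{1-2H} dt = 1/(2-2H)`.
-/

section

variable {E : Type*} [NormedAddCommGroup E] [NormedSpace ℝ E] [CompleteSpace E]

theorem integral_smul_eq_smul_integral_add_integral_deriv_smul {φ φ' : ℝ → ℝ} {P : ℝ → E}
    {a b : ℝ} (hab : a ≤ b) (hφ : ∀ x ∈ Icc a b, HasDerivAt φ (φ' x) x)
    (hφ' : ContinuousOn φ' (Icc a b)) (hP : IntervalIntegrable P volume a b) :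
    ∫ u in a..b, φ u • P u = φ a • (∫ u in a..b, P u) + ∫ r in a..b, φ' r • ∫ u in r..b, P u := by
  have hPi := (intervalIntegrable_iff_integrableOn_Ioc_of_le hab).1 hP
  -- Write `φ u - φ a = ∫_a^u φ'` and swap the two integrals over the triangle `r ≤ u`.
  set F : ℝ → ℝ → E := fun r u => if r ≤ u then φ' r • P u else 0 with hF_def
  have hF : IntegrableOn (Function.uncurry F) (uIoc a b ×ˢ uIoc a b) := by
    rw [uIoc_of_le hab, IntegrableOn, Measure.volume_eq_prod, ← Measure.prod_restrict]
    refine (((hφ'.integrableOn_Icc.mono_set Ioc_subset_Icc_self).smul_prod hPi).indicator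
      (measurableSet_le measurable_fst measurable_snd)).congr (ae_of_all _ fun p => ?_)
    simp only [indicator, mem_ofPred_eq, hF_def, Function.uncurry]
  have inner_r : ∀ u ∈ Ioc a b, ∫ r in a..b, F r u = (φ u - φ a) • P u := by
    intro u hu
    have hFu : ∀ r, F r u = (Iic u).indicator (fun r => φ' r • P u) r := fun r => rfl
    rw [intervalIntegral.integral_of_le hab, funext hFu, setIntegral_indicator measurableSet_Iic,
      Ioc_inter_Iic, min_eq_right hu.2, ← intervalIntegral.integral_of_le hu.1.le,
      intervalIntegral.integral_smul_const, intervalIntegral.integral_eq_sub_of_hasDerivAt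
        (fun x hx => hφ x (Icc_subset_Icc_right hu.2 (uIcc_of_le hu.1.le ▸ hx)))
        ((hφ'.mono (Icc_subset_Icc_right hu.2)).intervalIntegrable_of_Icc hu.1.le)]
  have inner_u : ∀ r ∈ Ioc a b, ∫ u in a..b, F r u = φ' r • ∫ u in r..b, P u := by
    intro r hr
    have hFr : ∀ u, F r u = (Ici r).indicator (fun u => φ' r • P u) u := fun u => rfl
    have hIcc : Ioc a b ∩ Ici r = Icc r b := by
      ext u; simp only [mem_inter_iff, mem_Ioc, mem_Ici, mem_Icc]
      exact ⟨fun h => ⟨h.2, h.1.2⟩, fun h => ⟨⟨hr.1.trans_le h.1, h.2⟩, h.1⟩⟩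
    rw [intervalIntegral.integral_of_le hab, funext hFr, setIntegral_indicator measurableSet_Ici,
      hIcc, integral_Icc_eq_integral_Ioc, ← intervalIntegral.integral_of_le hr.2,
      intervalIntegral.integral_smul]
  have hφP : IntervalIntegrable (fun u => (φ u - φ a) • P u) volume a b :=
    (intervalIntegrable_iff_integrableOn_Ioc_of_le hab).2
      (hPi.continuousOn_smul_of_subset ((HasDerivAt.continuousOn hφ).sub continuousOn_const)
        isCompact_Icc measurableSet_Ioc Ioc_subset_Icc_self)
  calc ∫ u in a..b, φ u • P u = ∫ u in a..b, (φ a • P u + (φ u - φ a) • P u) := by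
        congr 1 with u; rw [sub_smul, add_sub_cancel]
    _ = φ a • (∫ u in a..b, P u) + ∫ u in a..b, ∫ r in a..b, F r u := by
        rw [intervalIntegral.integral_add (f := fun u => φ a • P u) (hP.smul (φ a)) hφP,
          intervalIntegral.integral_smul]
        congr 1
        refine intervalIntegral.integral_congr_ae (ae_of_all _ fun u hu => ?_)
        rw [uIoc_of_le hab] at hu
        exact (inner_r u hu).symm
    _ = _ := by
        rw [← intervalIntegral_intervalIntegral_swap hF]
        congr 1
        refine intervalIntegral.integral_congr_ae (ae_of_all _ fun r hr => ?_)
        rw [uIoc_of_le hab] at hr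
        exact inner_u r hr

theorem norm_integral_exp_smul_le {α R s : ℝ} {P : ℝ → E} (hα : 0 ≤ α) (hs : s ∈ Icc (0:ℝ) 1)
    (hP : IntervalIntegrable P volume s 1) (hR : ∀ r ∈ Icc s 1, ‖∫ u in r..1, P u‖ ≤ R) :
    ‖∫ u in s..1, exp (-α * u) • P u‖ ≤ (1 + α) * R := by
  have hexp : ∀ r ∈ Icc s 1, exp (-α * r) ≤ 1 := fun r hr =>
    exp_le_one_iff.2 (by nlinarith [hs.1, hr.1])
  have hderiv : ∀ x, HasDerivAt (fun u => exp (-α * u)) (-α * exp (-α * x)) x := fun x => by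
    simpa [mul_comm] using ((hasDerivAt_id x).const_mul (-α)).exp
  have hboundary : ‖exp (-α * s) • ∫ u in s..1, P u‖ ≤ R := by
    rw [norm_smul, norm_of_nonneg (exp_pos _).le]
    exact (mul_le_of_le_one_left (norm_nonneg _) (hexp s ⟨le_rfl, hs.2⟩)).trans
      (hR s ⟨le_rfl, hs.2⟩)
  have hbulk : ‖∫ r in s..1, (-α * exp (-α * r)) • ∫ u in r..1, P u‖ ≤ α * R := by
    refine (intervalIntegral.norm_integral_le_of_norm_le_const (C := α * R)
      fun r hr => ?_).trans ?_
    · rw [uIoc_of_le hs.2] at hr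
      rw [norm_smul, norm_mul, norm_neg, norm_of_nonneg hα, norm_of_nonneg (exp_pos _).le]
      exact mul_le_mul (mul_le_of_le_one_right hα (hexp r (Ioc_subset_Icc_self hr)))
        (hR r (Ioc_subset_Icc_self hr)) (norm_nonneg _) hα
    · have hR0 : 0 ≤ R := (norm_nonneg _).trans (hR s ⟨le_rfl, hs.2⟩)
      rw [abs_of_nonneg (sub_nonneg.2 hs.2)]
      nlinarith [hs.1, mul_nonneg hα hR0]
  rw [integral_smul_eq_smul_integral_add_integral_deriv_smul hs.2 (fun x _ => hderiv x)
    (by fun_prop) hP]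
  calc _ ≤ R + α * R := (norm_add_le _ _).trans (add_le_add hboundary hbulk)
    _ = (1 + α) * R := by ring

omit [CompleteSpace E] in
theorem norm_integral_smul_sub_smul_le {k : ℝ → ℝ} {V P : ℝ → E} {a b κ v c : ℝ} (hab : a ≤ b)
    (hk : AEStronglyMeasurable k (volume.restrict (Ioc a b))) (hkκ : ∀ s ∈ Ioc a b, ‖k s‖ ≤ κ)
    (hV : AEStronglyMeasurable V (volume.restrict (Ioc a b))) (hVv : ∀ s ∈ Ioc a b, ‖V s‖ ≤ v)
    (hP : IntegrableOn P (Ioc a b)) :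
    ‖∫ s in a..b, k s • (V s - c • P s)‖ ≤ κ * v * (b - a) + |c| * ‖∫ s in a..b, k s • P s‖ := by
  have hkV : ∀ s ∈ Ioc a b, ‖k s • V s‖ ≤ κ * v := fun s hs => by
    rw [norm_smul]
    exact mul_le_mul (hkκ s hs) (hVv s hs) (norm_nonneg _) ((norm_nonneg _).trans (hkκ s hs))
  have hkVi : IntervalIntegrable (fun s => k s • V s) volume a b :=
    (intervalIntegrable_iff_integrableOn_Ioc_of_le hab).2 <|
      IntegrableOn.of_bound measure_Ioc_lt_top (hk.smul hV) (κ * v)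
        ((ae_restrict_mem measurableSet_Ioc).mono hkV)
  have hkPi : IntervalIntegrable (fun s => k s • P s) volume a b :=
    (intervalIntegrable_iff_integrableOn_Ioc_of_le hab).2 <|
      hP.bdd_smul κ hk ((ae_restrict_mem measurableSet_Ioc).mono hkκ)
  have hsplit : ∫ s in a..b, k s • (V s - c • P s)
      = (∫ s in a..b, k s • V s) - c • ∫ s in a..b, k s • P s := by
    rw [← intervalIntegral.integral_smul,
      ← intervalIntegral.integral_sub (g := fun s => c • k s • P s) hkVi (hkPi.smul c)]
    congr 1 with s
    rw [smul_sub, smul_comm]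
  have hkV_int : ‖∫ s in a..b, k s • V s‖ ≤ κ * v * (b - a) := by
    refine (intervalIntegral.norm_integral_le_of_norm_le_const (C := κ * v)
      fun s hs => ?_).trans_eq ?_
    · exact hkV s (uIoc_of_le hab ▸ hs)
    · rw [abs_of_nonneg (sub_nonneg.2 hab)]
  rw [hsplit]
  refine (norm_sub_le _ _).trans (add_le_add hkV_int ?_)
  rw [norm_smul, norm_eq_abs]

omit [NormedSpace ℝ E] [CompleteSpace E] in
theorem norm_add_sq_le_of_norm_le {x y : E} {A B : ℝ} (h : ‖y‖ ≤ A + B) :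
    ‖x + y‖ ^ 2 ≤ 2 * ‖x‖ ^ 2 + 4 * A ^ 2 + 4 * B ^ 2 := by
  have hxy : ‖x + y‖ ≤ ‖x‖ + ‖y‖ := norm_add_le x y
  have hy : ‖y‖ ^ 2 ≤ (A + B) ^ 2 := pow_le_pow_left₀ (norm_nonneg y) h 2
  nlinarith [norm_nonneg (x + y), sq_nonneg (‖x‖ - ‖y‖), sq_nonneg (A - B)]

theorem continuousOn_Ker_Ioc {H t b : ℝ} (hH : 1/2 < H) (htb : t ≤ b) :
    ContinuousOn (fun s => Ker H s t) (Ioc t b) := by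
  set f : ℝ → ℝ := fun u => u ^ (H - 1/2) * (u - t) ^ (H - 3/2)
  have hf : IntegrableOn f (Icc t b) := by
    have hsing : IntervalIntegrable (fun u : ℝ => (u - t) ^ (H - 3/2)) volume t b := by
      simpa using (intervalIntegral.intervalIntegrable_rpow' (a := 0) (b := b - t)
        (by linarith : -1 < H - 3/2)).comp_sub_right t
    exact (intervalIntegrable_iff_integrableOn_Icc_of_le htb).1 (hsing.continuousOn_mul
      (continuousOn_id.rpow_const fun _ _ => Or.inr (by linarith : (0:ℝ) ≤ H - 1/2)))
  have hprim : ContinuousOn (fun s => cH H * t ^ ((1:ℝ)/2 - H) * ∫ u in t..s, f u) (Icc t b) :=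
    continuousOn_const.mul (uIcc_of_le htb ▸ intervalIntegral.continuousOn_primitive_interval
      (uIcc_of_le htb ▸ hf))
  exact (hprim.mono Ioc_subset_Icc_self).congr fun s hs => if_pos hs.1

theorem norm_integral_Ker_smul_sub_le {H α C₁ R t : ℝ} (hH : 1/2 < H) (hα : 0 ≤ α)
    (ht : t ∈ Ioc (0:ℝ) 1)
    (hK : ∀ s ∈ Ioc t 1, 0 ≤ Ker H s t ∧ Ker H s t ≤ C₁ * t ^ ((1:ℝ)/2 - H))
    {P : ℝ → E} (hP : IntegrableOn P (Ioc 0 1))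
    (hR : ∀ r ∈ Icc (0:ℝ) 1, ‖∫ u in r..1, P u‖ ≤ R) :
    ‖∫ s in t..1, Ker H s t •
        ((α^2 * exp (α * s)) • (∫ u in s..1, exp (-α * u) • P u) - α • P s)‖
      ≤ C₁ * t ^ ((1:ℝ)/2 - H) * (α^2 * exp α * ((1 + α) * R)) * (1 - t)
        + α * ‖∫ s in t..1, Ker H s t • P s‖ := by
  set Q : ℝ → E := fun s => ∫ u in s..1, exp (-α * u) • P u
  have hIoc : Ioc t 1 ⊆ Icc (0:ℝ) 1 := fun s hs => ⟨ht.1.le.trans hs.1.le, hs.2⟩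
  have hQ : ∀ s ∈ Icc (0:ℝ) 1, ‖Q s‖ ≤ (1 + α) * R := fun s hs =>
    norm_integral_exp_smul_le hα hs
      ((intervalIntegrable_iff_integrableOn_Ioc_of_le hs.2).2
        (hP.mono_set (Ioc_subset_Ioc_left hs.1)))
      fun r hr => hR r ⟨hs.1.trans hr.1, hr.2⟩
  have hQc : ContinuousOn Q (Icc 0 1) := by
    have hexpP : IntegrableOn (fun u => exp (-α * u) • P u) (uIcc 0 1) := by
      rw [uIcc_of_le zero_le_one, integrableOn_Icc_iff_integrableOn_Ioc]
      exact hP.continuousOn_smul_of_subset (by fun_prop) isCompact_Icc measurableSet_Ioc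
        Ioc_subset_Icc_self
    simpa only [uIcc_of_le zero_le_one] using
      intervalIntegral.continuousOn_primitive_interval_left hexpP
  have hV : ∀ s ∈ Ioc t 1, ‖(α^2 * exp (α * s)) • Q s‖ ≤ α^2 * exp α * ((1 + α) * R) := by
    intro s hs
    rw [norm_smul, norm_of_nonneg (by positivity)]
    gcongr
    · exact mul_le_of_le_one_right hα hs.2
    · exact hQ s (hIoc hs)
  refine (norm_integral_smul_sub_smul_le (V := fun s => (α^2 * exp (α * s)) • Q s) ht.2
    ((continuousOn_Ker_Ioc hH ht.2).aestronglyMeasurable measurableSet_Ioc)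
    (fun s hs => (norm_of_nonneg (hK s hs).1).trans_le (hK s hs).2)
    (((continuousOn_const.mul (by fun_prop)).smul (hQc.mono hIoc)).aestronglyMeasurable
      measurableSet_Ioc) hV (hP.mono_set (Ioc_subset_Ioc_left ht.1.le))).trans_eq ?_
  rw [abs_of_nonneg hα]

theorem norm_sq_add_integral_Ker_le {H α C₁ C Chat M t : ℝ} (hH : 1/2 < H) (hα : 0 ≤ α)
    (ht : t ∈ Ioc (0:ℝ) 1)
    (hK : ∀ s ∈ Ioc t 1, 0 ≤ Ker H s t ∧ Ker H s t ≤ C₁ * t ^ ((1:ℝ)/2 - H))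
    (x : E) {P : ℝ → E} (hP : IntegrableOn P (Ioc 0 1))
    (hPtail : ∀ r ∈ Icc (0:ℝ) 1, ‖∫ u in r..1, P u‖ ^ 2 ≤ C * M)
    (hKPtail : ‖∫ s in t..1, Ker H s t • P s‖ ^ 2 ≤ Chat * t ^ (1 - 2*H) * M) :
    ‖x + ∫ s in t..1, Ker H s t •
        ((α^2 * exp (α * s)) • (∫ u in s..1, exp (-α * u) • P u) - α • P s)‖ ^ 2
      ≤ 2 * ‖x‖ ^ 2 + (8 * α^4 * exp (2*α) * C₁^2 * (1 + α^2) * C + 4 * α^2 * Chat) * M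
          * t ^ (1 - 2*H) := by
  have hCM : 0 ≤ C * M := (sq_nonneg _).trans (hPtail 1 ⟨zero_le_one, le_rfl⟩)
  refine (norm_add_sq_le_of_norm_le (norm_integral_Ker_smul_sub_le hH hα ht hK hP
    fun r hr => by simpa using abs_le_sqrt (hPtail r hr))).trans ?_
  have hT : (t ^ ((1:ℝ)/2 - H)) ^ 2 = t ^ (1 - 2*H) := by
    rw [← rpow_natCast, ← rpow_mul ht.1.le]; congr 1; push_cast; ring
  have hQpart : (C₁ * t ^ ((1:ℝ)/2 - H) * (α^2 * exp α * ((1 + α) * √(C * M))) * (1 - t)) ^ 2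
      ≤ 2 * α^4 * exp (2*α) * C₁^2 * (1 + α^2) * C * M * t ^ (1 - 2*H) := by
    have h1t : (1 - t) ^ 2 ≤ 1 := by nlinarith [ht.1, ht.2]
    have hα2 : (1 + α) ^ 2 ≤ 2 * (1 + α^2) := by nlinarith [sq_nonneg (1 - α)]
    have hX : 0 ≤ α^4 * exp (2*α) * C₁^2 * t ^ (1 - 2*H) * (C * M) :=
      mul_nonneg (mul_nonneg (by positivity) (rpow_nonneg ht.1.le _)) hCM
    calc _ ≤ (C₁ * t ^ ((1:ℝ)/2 - H) * (α^2 * exp α * ((1 + α) * √(C * M)))) ^ 2 := by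
          rw [mul_pow _ (1 - t)]; exact mul_le_of_le_one_right (sq_nonneg _) h1t
      _ = α^4 * exp (2*α) * C₁^2 * t ^ (1 - 2*H) * (C * M) * (1 + α) ^ 2 := by
          rw [← hT, two_mul, exp_add]
          linear_combination (C₁^2 * (t ^ ((1:ℝ)/2 - H))^2 * α^4 * exp α * exp α * (1 + α)^2)
            * sq_sqrt hCM
      _ ≤ _ := by nlinarith [mul_le_mul_of_nonneg_left hα2 hX]
  have hPpart : (α * ‖∫ s in t..1, Ker H s t • P s‖) ^ 2 ≤ α^2 * (Chat * t ^ (1 - 2*H) * M) := by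
    rw [mul_pow]; gcongr
  linarith

end

theorem stmt_17_general (H : ℝ) (hH : H ∈ Set.Ioo (1/2 : ℝ) 1) (n : ℕ)
    (α : ℝ) (hα : 0 < α)
    (C₁ : ℝ)
    (hK : ∀ t s : ℝ, 0 < t → t < s → s ≤ 1 →
      0 ≤ Ker H s t ∧ Ker H s t ≤ C₁ * t ^ ((1:ℝ)/2 - H))
    (C Chat : ℝ)
    (g P : ℝ → EuclideanSpace ℝ (Fin n))
    (hg : MemLp g 2 (volume.restrict (Set.Ioc (0:ℝ) 1)))
    (hP : MemLp P 2 (volume.restrict (Set.Ioc (0:ℝ) 1)))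
    (hPtail : ∀ t ∈ Set.Icc (0:ℝ) 1,
      ‖∫ s in t..(1:ℝ), P s‖^2 ≤ C * ∫ s in (0:ℝ)..1, ‖g s‖^2)
    (hKPtail : ∀ t ∈ Set.Ioc (0:ℝ) 1,
      ‖∫ s in t..(1:ℝ), Ker H s t • P s‖^2 ≤
        Chat * t ^ (1 - 2*H) * ∫ s in (0:ℝ)..1, ‖g s‖^2) :
    (∫ t in (0:ℝ)..1,
        ‖g t + ∫ s in t..(1:ℝ),
            Ker H s t •
              ((α^2 * Real.exp (α * s)) • (∫ u in s..(1:ℝ), Real.exp (-α * u) • P u)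
                - α • P s)‖^2)
      ≤ 2 * (1 + 4 * α^4 * Real.exp (2*α) * C₁^2 * (1 + α^2) * C / (2 - 2*H)
            + 2 * α^2 * Chat / (2 - 2*H)) *
          ∫ s in (0:ℝ)..1, ‖g s‖^2 := by
  obtain ⟨hH₁, hH₂⟩ := hH
  have hH' : 2 - 2*H ≠ 0 := by linarith
  set M := ∫ s in (0:ℝ)..1, ‖g s‖^2
  set K₀ := 8 * α^4 * exp (2*α) * C₁^2 * (1 + α^2) * C + 4 * α^2 * Chat
  have hg2 : IntervalIntegrable (fun t => 2 * ‖g t‖ ^ 2) volume 0 1 :=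
    (intervalIntegrable_iff_integrableOn_Ioc_of_le zero_le_one).2
      ((hg.integrable_norm_pow two_ne_zero).const_mul 2)
  have hpow : IntervalIntegrable (fun t : ℝ => t ^ (1 - 2*H)) volume 0 1 :=
    intervalIntegral.intervalIntegrable_rpow' (by linarith)
  have hpt := fun t (ht : t ∈ Ioc (0:ℝ) 1) => norm_sq_add_integral_Ker_le hH₁ hα.le ht
    (fun s hs => hK t s ht.1 hs.1 hs.2) (g t) (hP.integrable one_le_two) hPtail (hKPtail t ht)
  calc _ ≤ ∫ t in (0:ℝ)..1, (2 * ‖g t‖ ^ 2 + K₀ * M * t ^ (1 - 2*H)) := by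
        rw [intervalIntegral.integral_of_le zero_le_one,
          intervalIntegral.integral_of_le zero_le_one]
        exact integral_mono_of_nonneg (ae_of_all _ fun _ => sq_nonneg _)
          (hg2.1.add (hpow.1.const_mul _)) ((ae_restrict_mem measurableSet_Ioc).mono hpt)
    _ = 2 * M + K₀ * M / (2 - 2*H) := by
        rw [intervalIntegral.integral_add hg2 (hpow.const_mul _),
          intervalIntegral.integral_const_mul, intervalIntegral.integral_const_mul,
          integral_rpow (Or.inl (by linarith)), show 1 - 2*H + 1 = 2 - 2*H by ring, one_rpow,
          zero_rpow hH', sub_zero, mul_one_div]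
    _ = _ := by
        field_simp
        ring

/-- The deterministic core estimate of Theorem 4.2: with `g = K⁻¹DF` and `P` the
process (25), the `L²` norm of the martingale-representation integrand is bounded by
the Logarithmic-Sobolev constant times `∫_0^1 |g|²`. -/
theorem stmt_17 (H : ℝ) (hH : H ∈ Set.Ioo (1/2 : ℝ) 1) (n : ℕ) (hn : 1 ≤ n)
    (α : ℝ) (hα : 0 < α)
    (C₁ : ℝ) (hC₁ : 0 < C₁)
    (hK : ∀ t s : ℝ, 0 < t → t < s → s ≤ 1 →
      0 ≤ Ker H s t ∧ Ker H s t ≤ C₁ * t ^ ((1:ℝ)/2 - H))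
    (C Chat : ℝ) (hC : 0 < C) (hChat : 0 < Chat)
    (g P : ℝ → EuclideanSpace ℝ (Fin n))
    (hg : MemLp g 2 (volume.restrict (Set.Ioc (0:ℝ) 1)))
    (hP : MemLp P 2 (volume.restrict (Set.Ioc (0:ℝ) 1)))
    (hPtail : ∀ t ∈ Set.Icc (0:ℝ) 1,
      ‖∫ s in t..(1:ℝ), P s‖^2 ≤ C * ∫ s in (0:ℝ)..1, ‖g s‖^2)
    (hKPtail : ∀ t ∈ Set.Ioc (0:ℝ) 1,
      ‖∫ s in t..(1:ℝ), Ker H s t • P s‖^2 ≤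
        Chat * t ^ (1 - 2*H) * ∫ s in (0:ℝ)..1, ‖g s‖^2) :
    (∫ t in (0:ℝ)..1,
        ‖g t + ∫ s in t..(1:ℝ),
            Ker H s t •
              ((α^2 * Real.exp (α * s)) • (∫ u in s..(1:ℝ), Real.exp (-α * u) • P u)
                - α • P s)‖^2)
      ≤ 2 * (1 + 4 * α^4 * Real.exp (2*α) * C₁^2 * (1 + α^2) * C / (2 - 2*H)
            + 2 * α^2 * Chat / (2 - 2*H)) *
          ∫ s in (0:ℝ)..1, ‖g s‖^2 :=
  stmt_17_general H hH n α hα C₁ hK C Chat g P hg hP hPtail hKPtail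
end
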